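/- Perturbation bound for log-det capacity: for matrices G, G̃ ∈ ℂ^{N×M}, Hermitian PSD Σ with operator norm ‖Σ‖ ≤ λ, and γ > 0, |log det(I + γ G Σ G^H) − log det(I + γ G̃ Σ G̃^H)| ≤ γ λ (‖G‖_F + ‖G̃‖_F) ‖G − G̃‖_F, where ‖·‖_F is the Frobenius norm. -/

import Mathlib

open Matrix
open scoped ComplexOrder

/-- Frobenius norm of a complex matrix. -/
noncomputable def frob {N M : ℕ} (A : Matrix (Fin N) (Fin M) ℂ) : ℝ :=
  Real.sqrt (∑ i, ∑ j, ‖A i j‖ ^ 2)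

/-!
`log det` is concave on positive definite matrices, so with `A = γ G Σ Gᴴ`, `B = γ G̃ Σ G̃ᴴ` and
`P = (I + B)⁻¹` we get `log det (I + A) - log det (I + B) ≤ re tr (P (A - B))`. Now
`A - B = γ (G Σ (G - G̃)ᴴ + (G - G̃) Σ G̃ᴴ)`, and since `0 ≤ P ≤ I` and `0 ≤ Σ ≤ λ I`, writing
`P = Cᴴ C` and `Σ = Dᴴ D` turns each `tr (P X Σ Yᴴ)` into the Frobenius inner product of
`C X Dᴴ` and `C Y Dᴴ`, whose Frobenius norms are at most `√λ ‖X‖_F` and `√λ ‖Y‖_F`.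
Cauchy–Schwarz bounds one side of the difference; exchanging `G` and `G̃` bounds the other.
-/

namespace Matrix

variable {𝕜 n : Type*} [RCLike 𝕜] [Fintype n]

open scoped MatrixOrder in
lemma PosSemidef.exists_eq_conjTranspose_mul_self [DecidableEq n] {A : Matrix n n 𝕜}
    (hA : A.PosSemidef) : ∃ B : Matrix n n 𝕜, A = Bᴴ * B :=
  CStarAlgebra.nonneg_iff_eq_star_mul_self.mp hA.nonneg

lemma PosSemidef.trace_mul_nonneg {A B : Matrix n n 𝕜} (hA : A.PosSemidef)
    (hB : B.PosSemidef) : 0 ≤ (A * B).trace := by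
  classical
  obtain ⟨D, rfl⟩ := hB.exists_eq_conjTranspose_mul_self
  rw [← Matrix.mul_assoc, trace_mul_comm]
  simpa only [Matrix.mul_assoc] using (hA.mul_mul_conjTranspose_same D).trace_nonneg

lemma PosSemidef.re_trace_mul_le_re_trace_mul {P Q C : Matrix n n 𝕜}
    (hPQ : (Q - P).PosSemidef) (hC : C.PosSemidef) :
    RCLike.re (P * C).trace ≤ RCLike.re (Q * C).trace := by
  have := (RCLike.nonneg_iff.mp (hPQ.trace_mul_nonneg hC)).1
  rwa [Matrix.sub_mul, trace_sub, map_sub, sub_nonneg] at this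

variable [DecidableEq n]

open scoped MatrixOrder in
lemma IsHermitian.posSemidef_smul_one_sub {S : Matrix n n 𝕜} (hS : S.IsHermitian) {lam : ℝ}
    (h : ∀ i, hS.eigenvalues i ≤ lam) : ((lam : 𝕜) • 1 - S).PosSemidef := by
  have : S ≤ algebraMap ℝ (Matrix n n 𝕜) lam := by
    rw [le_algebraMap_iff_spectrum_le hS.isSelfAdjoint, hS.spectrum_real_eq_range_eigenvalues]
    rintro _ ⟨i, rfl⟩
    exact h i
  rw [Algebra.algebraMap_eq_smul_one, RCLike.real_smul_eq_coe_smul (K := 𝕜)] at this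
  exact Matrix.le_iff.mp this

lemma PosSemidef.posSemidef_one_sub_inv_one_add {B : Matrix n n 𝕜} (hB : B.PosSemidef) :
    (1 - (1 + B)⁻¹).PosSemidef := by
  have hD : (1 + B).PosDef := PosDef.one.add_posSemidef hB
  have hU : IsUnit (1 + B).det := hD.isUnit.map detMonoidHom
  have key : (1 + B)⁻¹ * (B + Bᴴ * B) * ((1 + B)⁻¹)ᴴ = 1 - (1 + B)⁻¹ := by
    rw [hD.inv.isHermitian.eq, hB.isHermitian.eq, ← mul_one_add, Matrix.mul_assoc,
      Matrix.mul_assoc, Matrix.mul_nonsing_inv _ hU, Matrix.mul_one, eq_sub_iff_add_eq,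
      add_comm, ← mul_one_add, nonsing_inv_mul _ hU]
  rw [← key]
  exact (hB.add (posSemidef_conjTranspose_mul_self B)).mul_mul_conjTranspose_same _

lemma PosDef.re_det_pos {X : Matrix n n 𝕜} (hX : X.PosDef) : 0 < RCLike.re X.det :=
  (RCLike.pos_iff.mp hX.det_pos).1

lemma PosDef.ofReal_re_det {X : Matrix n n 𝕜} (hX : X.PosDef) :
    ((RCLike.re X.det : ℝ) : 𝕜) = X.det :=
  RCLike.conj_eq_iff_re.mp (by rw [← RCLike.star_def, ← det_conjTranspose, hX.isHermitian.eq])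

lemma PosDef.log_re_det_le_re_trace_sub_card {C : Matrix n n 𝕜} (hC : C.PosDef) :
    Real.log (RCLike.re C.det) ≤ RCLike.re C.trace - Fintype.card n := by
  rw [hC.isHermitian.det_eq_prod_eigenvalues, hC.isHermitian.trace_eq_sum_eigenvalues,
    ← RCLike.ofReal_prod, ← RCLike.ofReal_sum, RCLike.ofReal_re, RCLike.ofReal_re,
    Real.log_prod fun i _ => (hC.eigenvalues_pos i).ne']
  calc ∑ i, Real.log (hC.isHermitian.eigenvalues i)
      ≤ ∑ i, (hC.isHermitian.eigenvalues i - 1) :=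
        Finset.sum_le_sum fun i _ => Real.log_le_sub_one_of_pos (hC.eigenvalues_pos i)
    _ = _ := by simp [Finset.sum_sub_distrib]

lemma PosDef.log_re_det_sub_log_re_det_le {X Y : Matrix n n 𝕜} (hX : X.PosDef)
    (hY : Y.PosDef) :
    Real.log (RCLike.re X.det) - Real.log (RCLike.re Y.det) ≤
      RCLike.re (Y⁻¹ * (X - Y)).trace := by
  obtain ⟨R, hR⟩ := hY.inv.posSemidef.exists_eq_conjTranspose_mul_self
  have hdet : (R * X * Rᴴ).det = X.det * (Y.det)⁻¹ := by
    rw [← Ring.inverse_eq_inv', ← det_nonsing_inv, hR, det_mul, det_mul, det_mul]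
    ring
  have hC : (R * X * Rᴴ).PosDef :=
    (hX.posSemidef.mul_mul_conjTranspose_same R).posDef_iff_det_ne_zero.mpr <| by
      rw [hdet]; exact mul_ne_zero hX.det_pos.ne' (inv_ne_zero hY.det_pos.ne')
  have hre_det : RCLike.re (R * X * Rᴴ).det = RCLike.re X.det / RCLike.re Y.det := by
    rw [hdet, ← hX.ofReal_re_det, ← hY.ofReal_re_det]
    simp only [← RCLike.ofReal_inv, ← RCLike.ofReal_mul, RCLike.ofReal_re, div_eq_mul_inv]
  calc Real.log (RCLike.re X.det) - Real.log (RCLike.re Y.det)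
      = Real.log (RCLike.re (R * X * Rᴴ).det) := by
        rw [hre_det, Real.log_div hX.re_det_pos.ne' hY.re_det_pos.ne']
    _ ≤ RCLike.re (R * X * Rᴴ).trace - Fintype.card n := hC.log_re_det_le_re_trace_sub_card
    _ = RCLike.re (Y⁻¹ * (X - Y)).trace := by
        rw [trace_mul_cycle, ← hR, Matrix.mul_sub,
          nonsing_inv_mul _ ((isUnit_iff_isUnit_det Y).mp hY.isUnit), trace_sub, trace_one,
          map_sub, RCLike.natCast_re]

end Matrix

section Frobenius

variable {N M : ℕ}

lemma frob_nonneg (A : Matrix (Fin N) (Fin M) ℂ) : 0 ≤ frob A :=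
  Real.sqrt_nonneg _

lemma frob_sub_comm (A B : Matrix (Fin N) (Fin M) ℂ) : frob (A - B) = frob (B - A) := by
  simp only [frob, Matrix.sub_apply, norm_sub_rev]

lemma frob_sq (A : Matrix (Fin N) (Fin M) ℂ) : frob A ^ 2 = (A * Aᴴ).trace.re := by
  rw [frob, Real.sq_sqrt (by positivity)]
  simp [trace, mul_apply, Complex.re_sum, Complex.mul_conj, Complex.normSq_eq_norm_sq,
    -Complex.ofReal_pow]

lemma abs_re_trace_mul_conjTranspose_le (A B : Matrix (Fin N) (Fin M) ℂ) :
    |(A * Bᴴ).trace.re| ≤ frob A * frob B := by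
  have hsum : (A * Bᴴ).trace.re = ∑ i, ∑ j, (A i j * star (B i j)).re := by
    simp [trace, mul_apply, Complex.re_sum]
  calc |(A * Bᴴ).trace.re| ≤ ∑ i, ∑ j, ‖A i j‖ * ‖B i j‖ := by
        rw [hsum]
        refine (Finset.abs_sum_le_sum_abs _ _).trans (Finset.sum_le_sum fun i _ => ?_)
        refine (Finset.abs_sum_le_sum_abs _ _).trans (Finset.sum_le_sum fun j _ => ?_)
        simpa using Complex.abs_re_le_norm (A i j * star (B i j))
    _ ≤ frob A * frob B := by
        simpa [Fintype.sum_prod_type, frob] using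
          Real.sum_mul_le_sqrt_mul_sqrt Finset.univ (fun p : Fin N × Fin M => ‖A p.1 p.2‖)
            (fun p => ‖B p.1 p.2‖)

lemma frob_mul_mul_conjTranspose_le {C : Matrix (Fin N) (Fin N) ℂ}
    {D : Matrix (Fin M) (Fin M) ℂ} {lam : ℝ} (hlam : 0 ≤ lam) (hC : (1 - Cᴴ * C).PosSemidef)
    (hD : ((lam : ℂ) • 1 - Dᴴ * D).PosSemidef) (X : Matrix (Fin N) (Fin M) ℂ) :
    frob (C * X * Dᴴ) ≤ Real.sqrt lam * frob X := by
  have hsq : frob (C * X * Dᴴ) ^ 2 ≤ lam * frob X ^ 2 := calc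
    frob (C * X * Dᴴ) ^ 2 = (Cᴴ * C * (X * (Dᴴ * D) * Xᴴ)).trace.re := by
        rw [frob_sq, conjTranspose_mul, conjTranspose_mul, conjTranspose_conjTranspose,
          Matrix.mul_assoc Cᴴ, trace_mul_comm Cᴴ]
        simp only [Matrix.mul_assoc]
    _ ≤ (1 * (X * (Dᴴ * D) * Xᴴ)).trace.re :=
        hC.re_trace_mul_le_re_trace_mul
          ((posSemidef_conjTranspose_mul_self D).mul_mul_conjTranspose_same X)
    _ = (Dᴴ * D * (Xᴴ * X)).trace.re := by
        rw [Matrix.one_mul, trace_mul_cycle, trace_mul_comm]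
    _ ≤ ((lam : ℂ) • 1 * (Xᴴ * X)).trace.re :=
        hD.re_trace_mul_le_re_trace_mul (posSemidef_conjTranspose_mul_self X)
    _ = lam * frob X ^ 2 := by
        rw [smul_mul_assoc, Matrix.one_mul, trace_smul, frob_sq, trace_mul_comm]
        simp
  rw [← Real.sqrt_sq (frob_nonneg X), ← Real.sqrt_mul hlam]
  exact Real.le_sqrt_of_sq_le hsq

end Frobenius

lemma abs_re_trace_mul_mul_mul_conjTranspose_le {N M : ℕ} {P : Matrix (Fin N) (Fin N) ℂ}
    {S : Matrix (Fin M) (Fin M) ℂ} {lam : ℝ} (hlam : 0 ≤ lam) (hP : P.PosSemidef)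
    (hP1 : (1 - P).PosSemidef) (hS : S.PosSemidef) (hSle : ((lam : ℂ) • 1 - S).PosSemidef)
    (X Y : Matrix (Fin N) (Fin M) ℂ) :
    |(P * (X * S * Yᴴ)).trace.re| ≤ lam * (frob X * frob Y) := by
  obtain ⟨C, rfl⟩ := hP.exists_eq_conjTranspose_mul_self
  obtain ⟨D, rfl⟩ := hS.exists_eq_conjTranspose_mul_self
  have htrace : (Cᴴ * C * (X * (Dᴴ * D) * Yᴴ)).trace =
      (C * X * Dᴴ * (C * Y * Dᴴ)ᴴ).trace := by
    rw [conjTranspose_mul, conjTranspose_mul, conjTranspose_conjTranspose, Matrix.mul_assoc Cᴴ,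
      trace_mul_comm Cᴴ]
    simp only [Matrix.mul_assoc]
  calc |(Cᴴ * C * (X * (Dᴴ * D) * Yᴴ)).trace.re|
      ≤ frob (C * X * Dᴴ) * frob (C * Y * Dᴴ) := htrace ▸ abs_re_trace_mul_conjTranspose_le _ _
    _ ≤ (Real.sqrt lam * frob X) * (Real.sqrt lam * frob Y) :=
        mul_le_mul (frob_mul_mul_conjTranspose_le hlam hP1 hSle X)
          (frob_mul_mul_conjTranspose_le hlam hP1 hSle Y) (frob_nonneg _)
          (mul_nonneg (Real.sqrt_nonneg _) (frob_nonneg _))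
    _ = lam * (frob X * frob Y) := by
        rw [mul_mul_mul_comm, Real.mul_self_sqrt hlam]

noncomputable def logDetCapacity {N M : ℕ} (γ : ℝ) (Sg : Matrix (Fin M) (Fin M) ℂ)
    (G : Matrix (Fin N) (Fin M) ℂ) : ℝ :=
  Real.log ((1 + (γ : ℂ) • (G * Sg * Gᴴ)).det.re)

lemma logDetCapacity_sub_logDetCapacity_le {N M : ℕ} (G Gt : Matrix (Fin N) (Fin M) ℂ)
    {Sg : Matrix (Fin M) (Fin M) ℂ} (hSg : Sg.PosSemidef) {lam : ℝ} (hlam : 0 ≤ lam)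
    (hEig : ∀ i, hSg.1.eigenvalues i ≤ lam) {γ : ℝ} (hγ : 0 ≤ γ) :
    logDetCapacity γ Sg G - logDetCapacity γ Sg Gt ≤
      γ * lam * (frob G + frob Gt) * frob (G - Gt) := by
  have hγ' : (0 : ℂ) ≤ γ := Complex.zero_le_real.mpr hγ
  have hA := (hSg.mul_mul_conjTranspose_same G).smul hγ'
  have hB := (hSg.mul_mul_conjTranspose_same Gt).smul hγ'
  set P := (1 + (γ : ℂ) • (Gt * Sg * Gtᴴ))⁻¹
  have hP : P.PosSemidef := (PosDef.one.add_posSemidef hB).inv.posSemidef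
  have hSle := hSg.1.posSemidef_smul_one_sub hEig
  have hbound X Y := abs_re_trace_mul_mul_mul_conjTranspose_le hlam hP
    hB.posSemidef_one_sub_inv_one_add hSg hSle X Y
  have hdiff : G * Sg * Gᴴ - Gt * Sg * Gtᴴ = G * Sg * (G - Gt)ᴴ + (G - Gt) * Sg * Gtᴴ := by
    rw [conjTranspose_sub, Matrix.mul_sub, Matrix.sub_mul, Matrix.sub_mul]
    abel
  calc logDetCapacity γ Sg G - logDetCapacity γ Sg Gt
      ≤ (P * ((1 + (γ : ℂ) • (G * Sg * Gᴴ)) - (1 + (γ : ℂ) • (Gt * Sg * Gtᴴ)))).trace.re :=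
        (PosDef.one.add_posSemidef hA).log_re_det_sub_log_re_det_le
          (PosDef.one.add_posSemidef hB)
    _ = γ * ((P * (G * Sg * (G - Gt)ᴴ)).trace.re + (P * ((G - Gt) * Sg * Gtᴴ)).trace.re) := by
        rw [add_sub_add_left_eq_sub, ← smul_sub, hdiff, Matrix.mul_smul, trace_smul,
          Matrix.mul_add, trace_add]
        simp
    _ ≤ γ * (lam * (frob G * frob (G - Gt)) + lam * (frob (G - Gt) * frob Gt)) := by
        gcongr
        exacts [(le_abs_self _).trans (hbound _ _), (le_abs_self _).trans (hbound _ _)]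
    _ = γ * lam * (frob G + frob Gt) * frob (G - Gt) := by ring

/-- Perturbation bound for the log-det capacity: if `Σ` is Hermitian PSD with largest eigenvalue
at most `λ`, then `|log det(I + γ G Σ Gᴴ) − log det(I + γ G̃ Σ G̃ᴴ)| ≤
γ λ (‖G‖_F + ‖G̃‖_F) ‖G − G̃‖_F`. -/
theorem log_det_perturbation_bound
    (N M : ℕ) (G Gt : Matrix (Fin N) (Fin M) ℂ) (Sg : Matrix (Fin M) (Fin M) ℂ)
    (hSg : Sg.PosSemidef) (lam : ℝ) (hlam : 0 ≤ lam)
    (hEig : ∀ i, hSg.1.eigenvalues i ≤ lam) (γ : ℝ) (hγ : 0 < γ) :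
    |Real.log (((1 : Matrix (Fin N) (Fin N) ℂ) + (γ : ℂ) • (G * Sg * Gᴴ)).det.re) -
        Real.log (((1 : Matrix (Fin N) (Fin N) ℂ) + (γ : ℂ) • (Gt * Sg * Gtᴴ)).det.re)| ≤
      γ * lam * (frob G + frob Gt) * frob (G - Gt) := by
  change |logDetCapacity γ Sg G - logDetCapacity γ Sg Gt| ≤ _
  refine abs_sub_le_iff.mpr ⟨logDetCapacity_sub_logDetCapacity_le G Gt hSg hlam hEig hγ.le, ?_⟩
  calc logDetCapacity γ Sg Gt - logDetCapacity γ Sg G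
      ≤ γ * lam * (frob Gt + frob G) * frob (Gt - G) :=
        logDetCapacity_sub_logDetCapacity_le Gt G hSg hlam hEig hγ.le
    _ = γ * lam * (frob G + frob Gt) * frob (G - Gt) := by
        rw [add_comm (frob Gt), frob_sub_comm]
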